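/- arXiv:1208.0374 — 7 statements merged into one kernel-verified Lean document; each statement's English description precedes it below -/
import Mathlib

section
/- For each real number r > 0 and every finite coloring χ : ℝ² → Fin k of the Euclidean plane, the set of monochromatic rectangles whose side lengths are positive integer multiples of r is uncountable; that is, the set of quadruples (x, y, m, n) ∈ ℝ × ℝ × ℤ⁺ × ℤ⁺ such that the four points (x, y), (x + m·r, y), (x, y + n·r), (x + m·r, y + n·r) all receive the same color under χ is uncountable. -/
/-!
With `k` colors, look at the grid points `(x + a r, c r)`, `a c : ℕ`. Two of the infinitely many
columns agree on their first `k + 1` points, and two of those points share a color: this is a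
monochromatic rectangle with corner abscissa `x + a r`. So every real `x` is `q.1 - a r` for some
monochromatic rectangle `q` and some `a : ℕ`, and countably many rectangles cannot produce all of
`ℝ` this way.
-/

open Set

def monochromaticRectangles {α : Type*} (χ : ℝ × ℝ → α) (r : ℝ) : Set (ℝ × ℝ × ℤ × ℤ) :=
  {q | 0 < q.2.2.1 ∧ 0 < q.2.2.2 ∧
      χ (q.1 + (q.2.2.1 : ℝ) * r, q.2.1) = χ (q.1, q.2.1) ∧
      χ (q.1, q.2.1 + (q.2.2.2 : ℝ) * r) = χ (q.1, q.2.1) ∧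
      χ (q.1 + (q.2.2.1 : ℝ) * r, q.2.1 + (q.2.2.2 : ℝ) * r) = χ (q.1, q.2.1)}

theorem Fintype.exists_lt_map_eq_of_card_lt {ι β : Type*} [Fintype ι] [LinearOrder ι]
    [Fintype β] (f : ι → β) (h : Fintype.card β < Fintype.card ι) :
    ∃ x y, x < y ∧ f x = f y := by
  obtain ⟨x, y, hxy, hf⟩ := Fintype.exists_ne_map_eq_of_card_lt f h
  rcases hxy.lt_or_gt with hlt | hgt
  · exact ⟨x, y, hlt, hf⟩
  · exact ⟨y, x, hgt, hf.symm⟩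

theorem exists_monochromatic_grid_rectangle {α : Type*} [Fintype α] (f : ℕ → ℕ → α) :
    ∃ a b c d, a < b ∧ c < d ∧ f b c = f a c ∧ f a d = f a c ∧ f b d = f a c := by
  obtain ⟨a, b, hab, hcols⟩ := finite_univ.exists_lt_map_eq_of_forall_mem
    (f := fun a (i : Fin (Fintype.card α + 1)) => f a i) fun _ => mem_univ _
  obtain ⟨c, d, hcd, hrow⟩ :=
    Fintype.exists_lt_map_eq_of_card_lt (fun i : Fin (Fintype.card α + 1) => f a i) (by simp)
  have hcol (i : Fin (Fintype.card α + 1)) : f b i = f a i := (congrFun hcols i).symm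
  exact ⟨a, b, c, d, hab, hcd, hcol c, hrow.symm, (hcol d).trans hrow.symm⟩

theorem exists_mem_monochromaticRectangles_fst_eq {α : Type*} [Fintype α] (χ : ℝ × ℝ → α)
    (r x : ℝ) : ∃ q ∈ monochromaticRectangles χ r, ∃ a : ℕ, q.1 = x + a * r := by
  obtain ⟨a, b, c, d, hab, hcd, hbc, had, hbd⟩ :=
    exists_monochromatic_grid_rectangle fun a c : ℕ => χ (x + a * r, c * r)
  have hx : x + a * r + ((b - a : ℤ) : ℝ) * r = x + b * r := by push_cast; ring
  have hy : c * r + ((d - c : ℤ) : ℝ) * r = d * r := by push_cast; ring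
  refine ⟨(x + a * r, c * r, b - a, d - c), ⟨?_, ?_, ?_, ?_, ?_⟩, a, rfl⟩
  · simpa using hab
  · simpa using hcd
  · simpa only [hx] using hbc
  · simpa only [hy] using had
  · simpa only [hx, hy] using hbd

theorem not_countable_monochromaticRectangles {α : Type*} [Fintype α] (χ : ℝ × ℝ → α) (r : ℝ) :
    ¬ (monochromaticRectangles χ r).Countable := by
  intro hS
  have hcover :
      univ ⊆ ⋃ a : ℕ, (fun q : ℝ × ℝ × ℤ × ℤ => q.1 - a * r) '' monochromaticRectangles χ r := by
    intro x _
    obtain ⟨q, hq, a, hqx⟩ := exists_mem_monochromaticRectangles_fst_eq χ r x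
    exact mem_iUnion.2 ⟨a, q, hq, by simp [hqx]⟩
  exact Cardinal.not_countable_real ((countable_iUnion fun _ => hS.image _).mono hcover)

theorem uncountably_many_monochromatic_rectangles_int_multiples_general
    (r : ℝ) (k : ℕ) (χ : ℝ × ℝ → Fin k) :
    ¬ Set.Countable {q : ℝ × ℝ × ℤ × ℤ |
      0 < q.2.2.1 ∧ 0 < q.2.2.2 ∧
      χ (q.1 + (q.2.2.1 : ℝ) * r, q.2.1) = χ (q.1, q.2.1) ∧
      χ (q.1, q.2.1 + (q.2.2.2 : ℝ) * r) = χ (q.1, q.2.1) ∧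
      χ (q.1 + (q.2.2.1 : ℝ) * r, q.2.1 + (q.2.2.2 : ℝ) * r) = χ (q.1, q.2.1)} :=
  not_countable_monochromaticRectangles χ r

/-- For each `r > 0` and every finite coloring of the plane, the set of
monochromatic rectangles whose side lengths are positive integer multiples of
`r` is uncountable. -/
theorem uncountably_many_monochromatic_rectangles_int_multiples
    (r : ℝ) (hr : 0 < r) (k : ℕ) (χ : ℝ × ℝ → Fin k) :
    ¬ Set.Countable {q : ℝ × ℝ × ℤ × ℤ |
      0 < q.2.2.1 ∧ 0 < q.2.2.2 ∧
      χ (q.1 + (q.2.2.1 : ℝ) * r, q.2.1) = χ (q.1, q.2.1) ∧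
      χ (q.1, q.2.1 + (q.2.2.2 : ℝ) * r) = χ (q.1, q.2.1) ∧
      χ (q.1 + (q.2.2.1 : ℝ) * r, q.2.1 + (q.2.2.2 : ℝ) * r) = χ (q.1, q.2.1)} :=
  uncountably_many_monochromatic_rectangles_int_multiples_general r k χ
end

section
/- For any finite coloring χ : ℤ × ℤ → Fin k of the integer lattice, there exists a monochromatic square: there exist integers x, y and a positive integer d such that the four points (x, y), (x + d, y), (x, y + d), (x + d, y + d) all receive the same color. -/
/-! Gallai's theorem (`Combinatorics.exists_mono_homothetic_copy`, a consequence of Hales–Jewett)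
applied to the four corners of the unit square. -/

theorem Combinatorics.exists_mono_homothetic_parallelogram {M κ : Type*} [AddCommMonoid M]
    [Finite κ] (C : M → κ) (u v : M) :
    ∃ a > 0, ∃ b : M, C (b + a • u) = C b ∧ C (b + a • v) = C b ∧
      C (b + a • (u + v)) = C b := by
  classical
  obtain ⟨a, ha, b, c, hc⟩ := exists_mono_homothetic_copy {0, u, v, u + v} C
  have hvertex : ∀ s ∈ ({0, u, v, u + v} : Finset M), C (b + a • s) = c := fun s hs => by
    rw [add_comm]
    exact hc s hs
  have hbase : C b = c := by simpa using hvertex 0 (by simp)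
  exact ⟨a, ha, b, by rw [hbase]; exact hvertex u (by simp),
    by rw [hbase]; exact hvertex v (by simp), by rw [hbase]; exact hvertex (u + v) (by simp)⟩

/-- Any finite coloring of the integer lattice contains a monochromatic square
(sides parallel to the axes, positive side length). -/
theorem monochromatic_square_int_lattice (k : ℕ) (χ : ℤ × ℤ → Fin k) :
    ∃ (x y d : ℤ), 0 < d ∧
      χ (x + d, y) = χ (x, y) ∧
      χ (x, y + d) = χ (x, y) ∧
      χ (x + d, y + d) = χ (x, y) := by
  obtain ⟨a, ha, ⟨x, y⟩, hsquare⟩ :=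
    Combinatorics.exists_mono_homothetic_parallelogram χ ((1, 0) : ℤ × ℤ) (0, 1)
  refine ⟨x, y, a, by exact_mod_cast ha, ?_⟩
  simpa using hsquare
end

section
/- For each real number r > 0 and every finite coloring χ : ℝ² → Fin k of the Euclidean plane, there exist uncountably many monochromatic rectangles with aspect ratio r; that is, the set of triples (x, y, d) ∈ ℝ × ℝ × ℝ with d > 0 such that the four points (x, y), (x + r·d, y), (x, y + d), (x + r·d, y + d) all receive the same color under χ is uncountable. -/
/-!
Heights of monochromatic rectangles of aspect ratio `r` are plentiful: by Gallai's theorem,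
for every `t` some homothetic copy `n • R + b` of the `r t × t` rectangle `R` is monochromatic,
so `n t` is such a height. If there were only countably many monochromatic rectangles, their
heights `D` would be countable, hence so would be `⋃ n, D / n`, which contains every `t > 0`.
-/

open Set

theorem exists_mono_rectangle_of_height_nat_mul {κ : Type*} [Finite κ] (r t : ℝ)
    (χ : ℝ × ℝ → κ) :
    ∃ n : ℕ, 0 < n ∧ ∃ x y : ℝ,
      χ (x + r * (n * t), y) = χ (x, y) ∧
      χ (x, y + n * t) = χ (x, y) ∧
      χ (x + r * (n * t), y + n * t) = χ (x, y) := by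
  obtain ⟨n, hn, b, c, hmono⟩ :=
    Combinatorics.exists_mono_homothetic_copy {(0, 0), (r * t, 0), (0, t), (r * t, t)} χ
  have hcorner : ∀ u v : ℝ, n • ((u, v) : ℝ × ℝ) + b = (b.1 + n * u, b.2 + n * v) := by
    intro u v
    ext <;> simp [nsmul_eq_mul, add_comm]
  have h00 := hmono (0, 0) (by simp)
  have h10 := hmono (r * t, 0) (by simp)
  have h01 := hmono (0, t) (by simp)
  have h11 := hmono (r * t, t) (by simp)
  simp only [hcorner, mul_zero, add_zero] at h00 h10 h01 h11
  rw [← h00, mul_left_comm] at h10 h11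
  rw [← h00] at h01
  exact ⟨n, hn, b.1, b.2, h10, h01, h11⟩

theorem Set.Countable.setOf_exists_nat_mul_mem {K : Type*} [DivisionRing K] [CharZero K]
    {S : Set K} (hS : S.Countable) : {t : K | ∃ n : ℕ, n ≠ 0 ∧ (n : K) * t ∈ S}.Countable := by
  refine (countable_iUnion fun n : ℕ => hS.image (fun s => (n : K)⁻¹ * s)).mono ?_
  rintro t ⟨n, hn, hmem⟩
  exact mem_iUnion.2 ⟨n, _, hmem, inv_mul_cancel_left₀ (Nat.cast_ne_zero.2 hn) t⟩

theorem uncountably_many_monochromatic_rectangles_aspect_ratio_general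
    (r : ℝ) (k : ℕ) (χ : ℝ × ℝ → Fin k) :
    ¬ Set.Countable {p : ℝ × ℝ × ℝ |
      0 < p.2.2 ∧
      χ (p.1 + r * p.2.2, p.2.1) = χ (p.1, p.2.1) ∧
      χ (p.1, p.2.1 + p.2.2) = χ (p.1, p.2.1) ∧
      χ (p.1 + r * p.2.2, p.2.1 + p.2.2) = χ (p.1, p.2.1)} := by
  intro hc
  have hheights := (hc.image fun p => p.2.2).setOf_exists_nat_mul_mem
  refine (Cardinal.Real.Ioo_countable_iff (x := 0) (y := 1)).not.2 zero_lt_one.not_ge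
    (hheights.mono ?_)
  rintro t ⟨ht, -⟩
  obtain ⟨n, hn, x, y, hmono⟩ := exists_mono_rectangle_of_height_nat_mul r t χ
  exact ⟨n, hn.ne', (x, y, n * t), ⟨by positivity, hmono⟩, rfl⟩

/-- For each `r > 0` and every finite coloring of the plane, there are
uncountably many monochromatic rectangles with aspect ratio `r`. -/
theorem uncountably_many_monochromatic_rectangles_aspect_ratio
    (r : ℝ) (hr : 0 < r) (k : ℕ) (χ : ℝ × ℝ → Fin k) :
    ¬ Set.Countable {p : ℝ × ℝ × ℝ |
      0 < p.2.2 ∧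
      χ (p.1 + r * p.2.2, p.2.1) = χ (p.1, p.2.1) ∧
      χ (p.1, p.2.1 + p.2.2) = χ (p.1, p.2.1) ∧
      χ (p.1 + r * p.2.2, p.2.1 + p.2.2) = χ (p.1, p.2.1)} :=
  uncountably_many_monochromatic_rectangles_aspect_ratio_general r k χ
end

section
/- Let 0 < r < 1. For every 2-coloring χ : [0,1] × [0,1] → Fin 2 of the closed unit square, there exist uncountably many monochromatic rectangles with aspect ratio r contained in the unit square; that is, the set of triples (x, y, d) with d > 0 such that the four points (x, y), (x + r·d, y), (x, y + d), (x + r·d, y + d) all lie in [0,1] × [0,1] and all receive the same color under χ is uncountable. -/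
/-!
Hales–Jewett, applied to the four corners of a rectangle of aspect ratio `r`, gives an `n`
depending only on the number of colours such that at every scale `δ > 0` the box
`[0, n r δ] × [0, n δ]` contains a monochromatic rectangle of aspect ratio `r` and height `m δ`
for some positive integer `m`. For `δ < 1 / (n + 1)` this box lies in the unit square, so every
such `δ` is the height of a monochromatic rectangle divided by a positive integer. Countably many
rectangles would therefore leave only countably many such `δ`.
-/

open Finset

universe u

namespace Combinatorics

lemma Line.sum_apply_eq_card_nsmul_add {α ι M : Type*} [Fintype ι] [AddCommMonoid M]
    (l : Line α ι) (s : α → M) :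
    ∃ b : M, ∀ a, ∑ i, s (l a i) = #{i | l.idxFun i = none} • s a + b := by
  classical
  refine ⟨∑ i, (l.idxFun i).elim 0 s, fun a => ?_⟩
  have hsplit : ∀ i,
      s (l a i) = (if l.idxFun i = none then s a else 0) + (l.idxFun i).elim 0 s := by
    intro i
    cases h : l.idxFun i <;> simp [h]
  rw [Fintype.sum_congr _ _ hsplit, sum_add_distrib, sum_ite, sum_const_zero, add_zero,
    sum_const]

theorem exists_mono_homothetic_copy_mem_Icc (α κ : Type*) [Finite α] [Finite κ] :
    ∃ n : ℕ, ∀ {M : Type u} [AddCommMonoid M] [PartialOrder M] [IsOrderedAddMonoid M]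
      (s : α → M) (u : M), (∀ a, s a ∈ Set.Icc 0 u) → ∀ C : M → κ,
      ∃ m > 0, ∃ (b : M) (c : κ), ∀ a, m • s a + b ∈ Set.Icc 0 (n • u) ∧ C (m • s a + b) = c := by
  obtain ⟨ι, _, hι⟩ := Line.exists_mono_in_high_dimension α κ
  classical
  refine ⟨Fintype.card ι, fun s u hs C => ?_⟩
  obtain ⟨l, c, hl⟩ := hι fun v => C (∑ i, s (v i))
  obtain ⟨b, hb⟩ := l.sum_apply_eq_card_nsmul_add s
  have hm : 0 < #{i | l.idxFun i = none} :=
    card_pos.mpr ⟨l.proper.choose, mem_filter.mpr ⟨mem_univ _, l.proper.choose_spec⟩⟩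
  refine ⟨_, hm, b, c, fun a => ?_⟩
  rw [← hb]
  exact ⟨⟨sum_nonneg fun i _ => (hs _).1, sum_le_card_nsmul _ _ _ fun i _ => (hs _).2⟩, hl a⟩

end Combinatorics

theorem exists_mono_rectangle_mem_Icc (κ : Type*) [Finite κ] :
    ∃ n : ℕ, ∀ (C : ℝ × ℝ → κ) {r δ : ℝ}, 0 ≤ r → 0 ≤ δ → ∃ m : ℕ, 0 < m ∧ ∃ x y : ℝ,
      ∀ p ∈ ({(x, y), (x + r * (m * δ), y), (x, y + m * δ), (x + r * (m * δ), y + m * δ)} :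
        Set (ℝ × ℝ)), p ∈ Set.Icc 0 (n * (r * δ), n * δ) ∧ C p = C (x, y) := by
  obtain ⟨n, hn⟩ := Combinatorics.exists_mono_homothetic_copy_mem_Icc.{0} (Fin 4) κ
  refine ⟨n, fun C r δ hr hδ => ?_⟩
  set s : Fin 4 → ℝ × ℝ := ![(0, 0), (r * δ, 0), (0, δ), (r * δ, δ)]
  have hs : ∀ a, s a ∈ Set.Icc 0 (r * δ, δ) := by
    intro a
    fin_cases a <;> simp [s, Prod.le_def, hδ, mul_nonneg hr hδ]
  obtain ⟨m, hm, b, c, hmono⟩ := hn s (r * δ, δ) hs C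
  set q : Fin 4 → ℝ × ℝ := ![(b.1, b.2), (b.1 + r * (m * δ), b.2), (b.1, b.2 + m * δ),
    (b.1 + r * (m * δ), b.2 + m * δ)]
  have hcorner : ∀ a, m • s a + b = q a := by
    intro a
    fin_cases a <;> ext <;> simp [s, q] <;> ring
  have hq : ∀ a, q a ∈ Set.Icc 0 (n * (r * δ), n * δ) ∧ C (q a) = c := fun a => by
    rw [← hcorner]
    simpa only [Prod.smul_mk, nsmul_eq_mul] using hmono a
  refine ⟨m, hm, b.1, b.2, ?_⟩
  have hc : C (b.1, b.2) = c := (hq 0).2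
  rw [hc]
  rintro p (rfl | rfl | rfl | rfl)
  exacts [hq 0, hq 1, hq 2, hq 3]

/-- Let `0 < r < 1`. For every 2-coloring of the closed unit square there are
uncountably many monochromatic rectangles with aspect ratio `r` contained in
the unit square. -/
theorem uncountably_many_monochromatic_rectangles_in_unit_square
    (r : ℝ) (hr0 : 0 < r) (hr1 : r < 1)
    (χ : (Set.Icc ((0 : ℝ), (0 : ℝ)) (1, 1)) → Fin 2) :
    ¬ Set.Countable {p : ℝ × ℝ × ℝ |
      0 < p.2.2 ∧
      ∃ (h1 : ((p.1, p.2.1) : ℝ × ℝ) ∈ Set.Icc ((0 : ℝ), (0 : ℝ)) (1, 1))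
        (h2 : ((p.1 + r * p.2.2, p.2.1) : ℝ × ℝ) ∈ Set.Icc ((0 : ℝ), (0 : ℝ)) (1, 1))
        (h3 : ((p.1, p.2.1 + p.2.2) : ℝ × ℝ) ∈ Set.Icc ((0 : ℝ), (0 : ℝ)) (1, 1))
        (h4 : ((p.1 + r * p.2.2, p.2.1 + p.2.2) : ℝ × ℝ) ∈ Set.Icc ((0 : ℝ), (0 : ℝ)) (1, 1)),
        χ ⟨_, h2⟩ = χ ⟨_, h1⟩ ∧ χ ⟨_, h3⟩ = χ ⟨_, h1⟩ ∧ χ ⟨_, h4⟩ = χ ⟨_, h1⟩} := by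
  intro hT
  obtain ⟨n, hn⟩ := exists_mono_rectangle_mem_Icc (Fin 2)
  have hε : (0 : ℝ) < 1 / (n + 1) := by positivity
  refine not_le.mpr hε <| Cardinal.Real.Ioo_countable_iff.mp <|
    ((hT.prod Set.countable_univ).image fun q : (ℝ × ℝ × ℝ) × ℕ => q.1.2.2 / q.2).mono ?_
  rintro δ ⟨hδ0, hδε⟩
  set C := Function.extend Subtype.val χ 0
  have hC : ∀ p hp, χ ⟨p, hp⟩ = C p := fun p hp =>
    (Subtype.val_injective.extend_apply χ 0 ⟨p, hp⟩).symm
  obtain ⟨m, hm, x, y, hrect⟩ := hn C hr0.le hδ0.le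
  have hnδ : n * δ ≤ 1 := by
    rw [lt_div_iff₀ (by positivity)] at hδε
    linarith
  have hbox : Set.Icc 0 (n * (r * δ), n * δ) ⊆ Set.Icc ((0 : ℝ), (0 : ℝ)) (1, 1) :=
    Set.Icc_subset_Icc_right ⟨by nlinarith, hnδ⟩
  obtain ⟨h1, -⟩ := hrect (x, y) (by simp)
  obtain ⟨h2, e2⟩ := hrect (x + r * (m * δ), y) (by simp)
  obtain ⟨h3, e3⟩ := hrect (x, y + m * δ) (by simp)
  obtain ⟨h4, e4⟩ := hrect (x + r * (m * δ), y + m * δ) (by simp)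
  refine ⟨((x, y, m * δ), m), ⟨⟨by positivity, hbox h1, hbox h2, hbox h3, hbox h4, ?_⟩, trivial⟩,
    by field_simp⟩
  simp only [hC]
  exact ⟨e2, e3, e4⟩
end

section
/- For any finite coloring χ : ℝ² → Fin k of the Euclidean plane, there exist uncountably many real numbers r > 0 such that for each such r, there exist uncountably many monochromatic equilateral triangles with side length r that are homothetic to the unit equilateral triangle 𝒯 = {(0,0), (1,0), (1/2, √3/2)}; that is, the set of r > 0 for which the set {a ∈ ℝ² : the three points a, a + (r, 0), a + (r/2, r√3/2) all receive the same color under χ} is uncountable, is itself uncountable. -/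
/-!
Suppose only countably many sides `r` carried uncountably many monochromatic triangles. Then for
all `t > 0` outside a countable set, every side `n * t` with `n ≥ 1` carries only countably many.
Colour the lattice `w + t • (ℕ u + ℕ v)` spanned by the triangle's edge vectors `u, v`: Gallai's
theorem (`Combinatorics.exists_mono_homothetic_copy`) yields a monochromatic copy of `{0, u, v}`
scaled by some `n ≥ 1`, whose base point is a lattice translate of `w`. Hence every point `w` of
the plane is a translate, by one of countably many lattice vectors, of a base point lying in one
of countably many countable sets, so the plane would be countable.
-/

open Set

variable {E κ ι : Type*} [AddCommGroup E] [Module ℝ E] [Fintype ι]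

def monochromaticPositions (χ : E → κ) (v : ι → E) (r : ℝ) : Set E :=
  {a | ∀ i, χ (a + r • v i) = χ a}

lemma exists_lattice_translate_mem_monochromaticPositions [Finite κ] (χ : E → κ) (v : ι → E)
    (t : ℝ) (w : E) :
    ∃ n : ℕ, 0 < n ∧ ∃ m : ι → ℕ,
      w + t • Fintype.linearCombination ℕ v m ∈ monochromaticPositions χ v (n * t) := by
  classical
  set f := Fintype.linearCombination ℕ v
  obtain ⟨n, hn, b, c, hc⟩ := Combinatorics.exists_mono_homothetic_copy
    (insert 0 (Finset.univ.image fun i => Pi.single i 1)) fun m => χ (w + t • f m)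
  refine ⟨n, hn, b, fun i => ?_⟩
  have hvertex := hc (Pi.single i 1) (by simp)
  have hbase := hc 0 (by simp)
  simp only [smul_zero, zero_add] at hbase
  rw [hbase, ← hvertex, map_add, map_nsmul, Fintype.linearCombination_apply_single, one_smul]
  congr 1
  rw [smul_add, smul_comm t n, ← Nat.cast_smul_eq_nsmul ℝ, smul_smul, mul_comm]
  abel

lemma exists_nat_not_countable_monochromaticPositions [Uncountable E] [Finite κ]
    (χ : E → κ) (v : ι → E) (t : ℝ) :
    ∃ n : ℕ, 0 < n ∧ ¬ (monochromaticPositions χ v (n * t)).Countable := by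
  by_contra! hcount
  set f := Fintype.linearCombination ℕ v
  have hcover : univ ⊆ ⋃ (n : ℕ) (_ : 0 < n) (m : ι → ℕ),
      (· - t • f m) '' monochromaticPositions χ v (n * t) := by
    intro w _
    obtain ⟨n, hn, m, hm⟩ := exists_lattice_translate_mem_monochromaticPositions χ v t w
    simp only [mem_iUnion, mem_image]
    exact ⟨n, hn, m, _, hm, add_sub_cancel_right w _⟩
  refine not_countable_univ (Countable.mono hcover ?_)
  exact countable_iUnion fun n => countable_iUnion fun hn =>
    countable_iUnion fun m => (hcount n hn).image _

lemma not_countable_Ioi_real (a : ℝ) : ¬ (Ioi a).Countable := by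
  rw [← Cardinal.le_aleph0_iff_set_countable, Cardinal.mk_Ioi_real, not_le]
  exact Cardinal.aleph0_lt_continuum

theorem not_countable_setOf_not_countable_monochromaticPositions [Uncountable E] [Finite κ]
    (χ : E → κ) (v : ι → E) :
    ¬ {r : ℝ | 0 < r ∧ ¬ (monochromaticPositions χ v r).Countable}.Countable := by
  intro hsides
  have hscales : (⋃ n : ℕ, (· / (n : ℝ)) '' {r : ℝ | 0 < r ∧
      ¬ (monochromaticPositions χ v r).Countable}).Countable :=
    countable_iUnion fun n => hsides.image _
  obtain ⟨t, ht, htscale⟩ := not_subset.1 fun h => not_countable_Ioi_real 0 (hscales.mono h)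
  obtain ⟨n, hn, hnt⟩ := exists_nat_not_countable_monochromaticPositions χ v t
  refine htscale (mem_iUnion.2 ⟨n, n * t, ⟨?_, hnt⟩, ?_⟩)
  · exact mul_pos (Nat.cast_pos.2 hn) ht
  · field_simp

/-- For any finite coloring of the plane, there are uncountably many `r > 0`
such that there are uncountably many monochromatic equilateral triangles of
side length `r` homothetic to the unit equilateral triangle
`{(0,0), (1,0), (1/2, √3/2)}`. -/
theorem uncountably_many_sides_uncountably_many_monochromatic_triangles
    (k : ℕ) (χ : ℝ × ℝ → Fin k) :
    ¬ Set.Countable {r : ℝ | 0 < r ∧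
      ¬ Set.Countable {a : ℝ × ℝ |
        χ (a.1 + r, a.2) = χ a ∧
        χ (a.1 + r / 2, a.2 + r * Real.sqrt 3 / 2) = χ a}} := by
  have htriangle (r : ℝ) : {a : ℝ × ℝ | χ (a.1 + r, a.2) = χ a ∧
      χ (a.1 + r / 2, a.2 + r * Real.sqrt 3 / 2) = χ a} =
      monochromaticPositions χ ![(1, 0), (1 / 2, Real.sqrt 3 / 2)] r := by
    ext a
    simp only [monochromaticPositions, mem_ofPred_eq, Fin.forall_fin_two, Matrix.cons_val_zero,
      Matrix.cons_val_one, Prod.smul_mk, smul_eq_mul, mul_one, mul_zero, mul_div_assoc',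
      Prod.add_def, add_zero]
  simp only [htriangle]
  exact not_countable_setOf_not_countable_monochromaticPositions _ _
end

section
/- For any 2-coloring χ : [0,1] × [0,1] → Fin 2 of the closed unit square, there exist uncountably many real numbers r ∈ (0, 1] such that for each such r, there exist uncountably many monochromatic equilateral triangles of side length r, homothetic to the unit equilateral triangle 𝒯 = {(0,0), (1,0), (1/2, √3/2)} and contained in the unit square; that is, the set of r ∈ (0, 1] for which the set {a ∈ ℝ² : the three points a, a + (r, 0), a + (r/2, r√3/2) all lie in [0,1] × [0,1] and all receive the same color under χ} is uncountable, is itself uncountable. -/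
/-!
For `u ∈ (0, 1/2]` and `s ∈ (0, 1/8]` the fifteen points `(u + s (i + j/2), s j √3/2)`,
`i + j ≤ 4`, of a triangular grid of mesh `s` lie in the unit square. Every 2-colouring of this
grid has a monochromatic triangle `(i, j), (i + d, j), (i, j + d)` (colour the five points with
`i = 0`; the other colours are then forced until a contradiction), which is a monochromatic
triangle of side `d s`. The label `(d, i, j)` ranges over a countable set, so pigeonhole over `u`
gives, for each `s`, uncountably many monochromatic triangles of one side `d s`, and pigeonhole
over `s` fixes one `d` for uncountably many `s`.
-/

open Set

local notation "unitSquare" => Icc ((0 : ℝ), (0 : ℝ)) (1, 1)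

theorem exists_not_countable_sep {α β : Type*} [Countable β] {s : Set α} (hs : ¬ s.Countable)
    {p : α → β → Prop} (h : ∀ x ∈ s, ∃ b, p x b) : ∃ b, ¬ {x ∈ s | p x b}.Countable := by
  by_contra! hp
  exact hs ((countable_iUnion hp).mono fun x hx ↦
    mem_iUnion.2 ((h x hx).imp fun b hb ↦ (⟨hx, hb⟩ : x ∈ {x ∈ s | p x b})))

theorem exists_monochromatic_corner (c : ℕ → ℕ → Bool) :
    ∃ i j d : ℕ, 0 < d ∧ i + j + d ≤ 4 ∧ c (i + d) j = c i j ∧ c i (j + d) = c i j := by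
  by_contra! h
  have := h 0 0 1; have := h 0 0 2; have := h 0 0 3; have := h 0 0 4; have := h 1 0 1
  have := h 1 0 2; have := h 1 0 3; have := h 2 0 1; have := h 2 0 2; have := h 3 0 1
  have := h 0 1 1; have := h 0 1 2; have := h 0 1 3; have := h 1 1 1; have := h 1 1 2
  have := h 2 1 1; have := h 0 2 1; have := h 0 2 2; have := h 1 2 1; have := h 0 3 1
  clear h
  simp only [Nat.ofNat_pos, zero_lt_one, le_refl, Nat.reduceAdd, Nat.reduceLeDiff,
    forall_const] at *
  cases h₀ : c 0 0 <;> cases h₁ : c 0 1 <;> cases h₂ : c 0 2 <;> cases h₃ : c 0 3 <;>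
    cases h₄ : c 0 4 <;> simp_all

def monochromaticTriangleBases {α : Type*} (χ : unitSquare → α) (r : ℝ) : Set (ℝ × ℝ) :=
  {a : ℝ × ℝ |
    ∃ (h1 : a ∈ unitSquare) (h2 : ((a.1 + r, a.2) : ℝ × ℝ) ∈ unitSquare)
      (h3 : ((a.1 + r / 2, a.2 + r * Real.sqrt 3 / 2) : ℝ × ℝ) ∈ unitSquare),
      χ ⟨_, h2⟩ = χ ⟨_, h1⟩ ∧ χ ⟨_, h3⟩ = χ ⟨_, h1⟩}

theorem mem_monochromaticTriangleBases {α : Type*} {χ : unitSquare → α} {f : ℝ × ℝ → α}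
    (hf : ∀ p, χ p = f p) {r : ℝ} {a : ℝ × ℝ} (h1 : a ∈ unitSquare)
    (h2 : ((a.1 + r, a.2) : ℝ × ℝ) ∈ unitSquare)
    (h3 : ((a.1 + r / 2, a.2 + r * Real.sqrt 3 / 2) : ℝ × ℝ) ∈ unitSquare)
    (e2 : f (a.1 + r, a.2) = f a) (e3 : f (a.1 + r / 2, a.2 + r * Real.sqrt 3 / 2) = f a) :
    a ∈ monochromaticTriangleBases χ r :=
  ⟨h1, h2, h3, by rw [hf, hf]; exact e2, by rw [hf, hf]; exact e3⟩

noncomputable def trianglePoint (u s : ℝ) (i j : ℕ) : ℝ × ℝ :=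
  (u + s * (i + j / 2), s * j * (Real.sqrt 3 / 2))

theorem trianglePoint_add_left (u s : ℝ) (i j d : ℕ) :
    trianglePoint u s (i + d) j =
      ((trianglePoint u s i j).1 + d * s, (trianglePoint u s i j).2) := by
  simp only [trianglePoint, Nat.cast_add, Prod.mk.injEq, and_true]
  ring

theorem trianglePoint_add_right (u s : ℝ) (i j d : ℕ) :
    trianglePoint u s i (j + d) =
      ((trianglePoint u s i j).1 + d * s / 2,
        (trianglePoint u s i j).2 + d * s * Real.sqrt 3 / 2) := by
  simp only [trianglePoint, Nat.cast_add, Prod.mk.injEq]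
  constructor <;> ring

theorem trianglePoint_injective_left (s : ℝ) (i j : ℕ) :
    Function.Injective fun u ↦ trianglePoint u s i j := fun u v huv ↦ by
  simpa [trianglePoint] using congrArg Prod.fst huv

theorem trianglePoint_mem_unitSquare {u s : ℝ} (hu : 0 ≤ u) (hs : 0 ≤ s) (hus : u + 4 * s ≤ 1)
    {i j : ℕ} (hij : i + j ≤ 4) : trianglePoint u s i j ∈ unitSquare := by
  have hij' : (i : ℝ) + j ≤ 4 := by exact_mod_cast hij
  have hsqrt : Real.sqrt 3 / 2 ≤ 1 := by
    rw [div_le_one two_pos, Real.sqrt_le_left two_pos.le]; norm_num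
  have hx : s * (i + j / 2) ≤ 4 * s := by nlinarith [j.cast_nonneg (α := ℝ)]
  have hy : s * j * (Real.sqrt 3 / 2) ≤ 4 * s :=
    calc s * j * (Real.sqrt 3 / 2) ≤ s * j * 1 := by gcongr
      _ ≤ 4 * s := by nlinarith [i.cast_nonneg (α := ℝ)]
  refine ⟨⟨?_, ?_⟩, ?_, ?_⟩ <;> dsimp only [trianglePoint]
  · positivity
  · positivity
  · linarith
  · linarith

theorem exists_trianglePoint_mem_monochromaticTriangleBases (χ : unitSquare → Fin 2) {u s : ℝ}
    (hu : 0 ≤ u) (hs : 0 ≤ s) (hus : u + 4 * s ≤ 1) :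
    ∃ d i j : ℕ, 0 < d ∧ d ≤ 4 ∧
      trianglePoint u s i j ∈ monochromaticTriangleBases χ (d * s) := by
  let f : ℝ × ℝ → Fin 2 := fun p ↦ if hp : p ∈ unitSquare then χ ⟨p, hp⟩ else 0
  obtain ⟨i, j, d, hd, hijd, h₁, h₂⟩ :=
    exists_monochromatic_corner fun i j ↦ finTwoEquiv (f (trianglePoint u s i j))
  have mem {i' j' : ℕ} (h : i' + j' ≤ 4) := trianglePoint_mem_unitSquare hu hs hus h
  refine ⟨d, i, j, hd, by omega, mem_monochromaticTriangleBases (f := f)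
    (fun p ↦ (dif_pos p.2).symm) (mem (by omega)) ?_ ?_ ?_ ?_⟩
  · exact trianglePoint_add_left u s i j d ▸ mem (by omega)
  · exact trianglePoint_add_right u s i j d ▸ mem (by omega)
  · exact trianglePoint_add_left u s i j d ▸ finTwoEquiv.injective h₁
  · exact trianglePoint_add_right u s i j d ▸ finTwoEquiv.injective h₂

theorem exists_not_countable_monochromaticTriangleBases (χ : unitSquare → Fin 2) {s : ℝ}
    (hs : s ∈ Ioc (0 : ℝ) (1 / 8)) :
    ∃ d : ℕ, 0 < d ∧ d ≤ 4 ∧ ¬ (monochromaticTriangleBases χ (d * s)).Countable := by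
  obtain ⟨⟨d, i, j⟩, hdij⟩ := exists_not_countable_sep
    (p := fun u (dij : ℕ × ℕ × ℕ) ↦ 0 < dij.1 ∧ dij.1 ≤ 4 ∧
      trianglePoint u s dij.2.1 dij.2.2 ∈ monochromaticTriangleBases χ (dij.1 * s))
    (by simp : ¬ (Ioc (0 : ℝ) (1 / 2)).Countable)
    fun u hu ↦ by
      obtain ⟨d, i, j, h⟩ := exists_trianglePoint_mem_monochromaticTriangleBases χ hu.1.le
        hs.1.le (by linarith [hu.2, hs.2])
      exact ⟨(d, i, j), h⟩
  obtain ⟨-, -, hd, hd4, -⟩ := Set.Infinite.nonempty fun hf ↦ hdij hf.countable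
  refine ⟨d, hd, hd4, fun hc ↦ hdij ?_⟩
  exact (hc.preimage (trianglePoint_injective_left s i j)).mono fun u hu ↦ hu.2.2.2

/-- For any 2-coloring of the closed unit square, there are uncountably many
`r ∈ (0, 1]` such that there are uncountably many monochromatic equilateral
triangles of side length `r`, homothetic to the unit equilateral triangle
`{(0,0), (1,0), (1/2, √3/2)}` and contained in the unit square. -/
theorem uncountably_many_monochromatic_triangles_in_unit_square
    (χ : (Set.Icc ((0 : ℝ), (0 : ℝ)) (1, 1)) → Fin 2) :
    ¬ Set.Countable {r : ℝ | r ∈ Set.Ioc (0 : ℝ) 1 ∧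
      ¬ Set.Countable {a : ℝ × ℝ |
        ∃ (h1 : a ∈ Set.Icc ((0 : ℝ), (0 : ℝ)) (1, 1))
          (h2 : ((a.1 + r, a.2) : ℝ × ℝ) ∈ Set.Icc ((0 : ℝ), (0 : ℝ)) (1, 1))
          (h3 : ((a.1 + r / 2, a.2 + r * Real.sqrt 3 / 2) : ℝ × ℝ) ∈
            Set.Icc ((0 : ℝ), (0 : ℝ)) (1, 1)),
          χ ⟨_, h2⟩ = χ ⟨_, h1⟩ ∧ χ ⟨_, h3⟩ = χ ⟨_, h1⟩}} := by
  intro hc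
  obtain ⟨d, hd⟩ := exists_not_countable_sep
    (p := fun s (d : ℕ) ↦ 0 < d ∧ d ≤ 4 ∧ ¬ (monochromaticTriangleBases χ (d * s)).Countable)
    (by simp : ¬ (Ioc (0 : ℝ) (1 / 8)).Countable)
    fun s hs ↦ exists_not_countable_monochromaticTriangleBases χ hs
  obtain ⟨-, -, hd0, hd4, -⟩ := Set.Infinite.nonempty fun hf ↦ hd hf.countable
  have hd0' : (0 : ℝ) < d := by exact_mod_cast hd0
  have hd4' : (d : ℝ) ≤ 4 := by exact_mod_cast hd4
  refine hd ((hc.preimage (mul_right_injective₀ hd0'.ne')).mono ?_)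
  rintro s ⟨⟨hs0, hs1⟩, -, -, hbases⟩
  exact ⟨⟨mul_pos hd0' hs0, by nlinarith⟩, hbases⟩
end

section
/- Let S be a finite subset of the integer lattice ℤ × ℤ (regarded as a subset of ℝ²). For any finite coloring χ : ℝ² → Fin k of the Euclidean plane, there exist uncountably many monochromatic homothetic copies of S; that is, the set of pairs (a, c) ∈ ℝ² × ℝ with c > 0 such that the set {a + c·s : s ∈ S} is monochromatic under χ is uncountable. -/
/-!
For every scale `r > 0`, Gallai's theorem applied to the coloring `m ↦ χ (r • m)` of `ℤ × ℤ`
yields a monochromatic copy of `S` whose scaling factor is a positive integer multiple of `r`.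
So the countably many sets `n⁻¹ • C`, where `C` is the set of scaling factors of monochromatic
copies, cover `(0, ∞)`; as `(0, ∞)` is uncountable, so is `C`.
-/

open Set

theorem not_countable_of_forall_exists_nat_mul_mem {U : Set ℝ}
    (h : ∀ r : ℝ, 0 < r → ∃ n : ℕ, 0 < n ∧ (n : ℝ) * r ∈ U) : ¬ U.Countable := by
  intro hU
  have hcover : Ioi (0 : ℝ) ⊆ ⋃ n : ℕ, (fun x => x / n) '' U := by
    intro r hr
    obtain ⟨n, hn, hnr⟩ := h r hr
    exact mem_iUnion.2 ⟨n, _, hnr, by field_simp⟩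
  have hIoi : (Ioi (0 : ℝ)).Countable :=
    (countable_iUnion fun n => hU.image _).mono hcover
  rw [← Cardinal.le_aleph0_iff_set_countable, Cardinal.mk_Ioi_real] at hIoi
  exact hIoi.not_gt Cardinal.aleph0_lt_continuum

def monoHomotheticCopies {κ : Type*} (S : Finset (ℤ × ℤ)) (χ : ℝ × ℝ → κ) :
    Set ((ℝ × ℝ) × ℝ) :=
  {p | 0 < p.2 ∧ ∀ s ∈ S, ∀ t ∈ S,
    χ (p.1.1 + p.2 * (s.1 : ℝ), p.1.2 + p.2 * (s.2 : ℝ)) =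
    χ (p.1.1 + p.2 * (t.1 : ℝ), p.1.2 + p.2 * (t.2 : ℝ))}

theorem exists_nat_mul_mem_image_snd_monoHomotheticCopies {κ : Type*} [Finite κ]
    (S : Finset (ℤ × ℤ)) (χ : ℝ × ℝ → κ) {r : ℝ} (hr : 0 < r) :
    ∃ n : ℕ, 0 < n ∧ (n : ℝ) * r ∈ Prod.snd '' monoHomotheticCopies S χ := by
  obtain ⟨n, hn, b, c, hc⟩ :=
    Combinatorics.exists_mono_homothetic_copy S fun m : ℤ × ℤ => χ (r * m.1, r * m.2)
  have hcopy : ∀ s ∈ S, χ (r * b.1 + n * r * s.1, r * b.2 + n * r * s.2) = c := by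
    intro s hs
    rw [← hc s hs]
    congr 1
    simp only [Prod.fst_add, Prod.snd_add, Prod.smul_fst, Prod.smul_snd]
    push_cast [nsmul_eq_mul]
    ring_nf
  refine ⟨n, hn, ((r * b.1, r * b.2), n * r), ⟨by positivity, fun s hs t ht => ?_⟩, rfl⟩
  exact (hcopy s hs).trans (hcopy t ht).symm

/-- For any finite `S ⊆ ℤ × ℤ` (viewed inside ℝ²) and any finite coloring of
the plane, the set of homothetic copies `{a + c • s : s ∈ S}` (with `c > 0`
real) of `S` that are monochromatic is uncountable. -/
theorem uncountably_many_monochromatic_homothetic_copies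
    (S : Finset (ℤ × ℤ)) (k : ℕ) (χ : ℝ × ℝ → Fin k) :
    ¬ Set.Countable {p : (ℝ × ℝ) × ℝ | 0 < p.2 ∧
      ∀ s ∈ S, ∀ t ∈ S,
        χ (p.1.1 + p.2 * (s.1 : ℝ), p.1.2 + p.2 * (s.2 : ℝ)) =
        χ (p.1.1 + p.2 * (t.1 : ℝ), p.1.2 + p.2 * (t.2 : ℝ))} := by
  intro hC
  have hscales : ¬ (Prod.snd '' monoHomotheticCopies S χ).Countable :=
    not_countable_of_forall_exists_nat_mul_mem fun _ =>
      exists_nat_mul_mem_image_snd_monoHomotheticCopies S χ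
  exact hscales (hC.image Prod.snd)
end
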